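/- arXiv:2007.10596 — 5 statements merged into one kernel-verified Lean document; each statement's English description precedes it below -/
import Mathlib

section
/- Let L ≥ 1, let Δ : Fin L × Fin L → ℝ be any matrix, and let T : Fin L × Fin L → ℝ be row-stochastic (T(k,r) ≥ 0 for all k,r and Σ_r T(k,r) = 1 for each k). Then Σ_{k,l} Δ(k,l) · (Σ_r T(k,r) · 𝟙[Δ(r,l) > 0]) ≤ Σ_{k,l} max(Δ(k,l), 0). Moreover, when T is the identity matrix the left-hand side equals Σ_{k,l} max(Δ(k,l), 0). (Hence the expected Correlated Agreement payment Σ_{k,l} Δ(k,l) Σ_r T(k,r) Sgn(Δ(r,l)) of an agent applying misreport strategy T is maximized by the truthful strategy T = identity.) -/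
open Finset

/-- for any matrix `Δ` and any row-stochastic misreport strategy `T`,
the expected Correlated Agreement payment
`Σ_{k,l} Δ(k,l) · Σ_r T(k,r) · Sgn(Δ(r,l))` is at most `Σ_{k,l} max(Δ(k,l), 0)`,
and the truthful strategy (`T` = identity) attains this bound. -/
theorem ca_truthful_strategy_maximizes
    (L : ℕ) (hL : 1 ≤ L)
    (Δ : Fin L → Fin L → ℝ) (T : Fin L → Fin L → ℝ)
    (hTnonneg : ∀ k r : Fin L, 0 ≤ T k r)
    (hTrow : ∀ k : Fin L, ∑ r : Fin L, T k r = 1) :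
    (∑ k : Fin L, ∑ l : Fin L,
        Δ k l * (∑ r : Fin L, T k r * (if 0 < Δ r l then (1 : ℝ) else 0))) ≤
      (∑ k : Fin L, ∑ l : Fin L, max (Δ k l) 0) ∧
    (∑ k : Fin L, ∑ l : Fin L,
        Δ k l * (∑ r : Fin L,
          (if k = r then (1 : ℝ) else 0) * (if 0 < Δ r l then (1 : ℝ) else 0))) =
      (∑ k : Fin L, ∑ l : Fin L, max (Δ k l) 0) := by
  constructor
  · apply Finset.sum_le_sum; intro k _
    apply Finset.sum_le_sum; intro l _
    set S := ∑ r : Fin L, T k r * (if 0 < Δ r l then (1 : ℝ) else 0) with hS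
    have hS0 : 0 ≤ S := Finset.sum_nonneg fun r _ => mul_nonneg (hTnonneg k r) (by split_ifs <;> norm_num)
    have hS1 : S ≤ 1 := by
      rw [← hTrow k]
      apply Finset.sum_le_sum; intro r _
      split_ifs with h
      · simp
      · simpa using hTnonneg k r
    rcases le_or_gt (Δ k l) 0 with h | h
    · calc Δ k l * S ≤ 0 := mul_nonpos_of_nonpos_of_nonneg h hS0
        _ ≤ max (Δ k l) 0 := le_max_right _ _
    · calc Δ k l * S ≤ Δ k l * 1 := mul_le_mul_of_nonneg_left hS1 h.le
        _ = Δ k l := mul_one _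
        _ ≤ max (Δ k l) 0 := le_max_left _ _
  · apply Finset.sum_congr rfl; intro k _
    apply Finset.sum_congr rfl; intro l _
    have : (∑ r : Fin L, (if k = r then (1 : ℝ) else 0) * (if 0 < Δ r l then (1 : ℝ) else 0))
        = if 0 < Δ k l then (1 : ℝ) else 0 := by
      rw [Finset.sum_eq_single k]
      · simp
      · intro r _ hr; simp [Ne.symm hr]
      · simp
    rw [this]
    rcases le_or_gt (Δ k l) 0 with h | h
    · simp [not_lt.mpr h, h]
    · simp [h, h.le]
end

section
/- Suppose F_i and F_j are conditionally independent given Y, FNR(F_i) + FPR(F_i) < 1, and FNR(F_j) + FPR(F_j) < 1. Then Sgn(Δ(F_i,F_j)) is the 2×2 identity matrix: Δ(F_i,F_j)(1,1) > 0, Δ(F_i,F_j)(2,2) > 0, Δ(F_i,F_j)(1,2) < 0, and Δ(F_i,F_j)(2,1) < 0. -/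
open MeasureTheory

/-- Probability of an event, as a real number. -/
noncomputable def pr {Ω : Type*} [MeasurableSpace Ω] (μ : Measure Ω) (s : Set Ω) : ℝ :=
  (μ s).toReal

/-- A `{1,2}`-valued random label. -/
def IsBinaryLabel {Ω : Type*} (F : Ω → ℕ) : Prop :=
  ∀ ω, F ω = 1 ∨ F ω = 2

/-- False negative rate: `FNR(F) = ℙ(F=2 ∣ Y=1)`. -/
noncomputable def fnr {Ω : Type*} [MeasurableSpace Ω] (μ : Measure Ω) (F Y : Ω → ℕ) : ℝ :=
  pr μ {ω | F ω = 2 ∧ Y ω = 1} / pr μ {ω | Y ω = 1}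

/-- False positive rate: `FPR(F) = ℙ(F=1 ∣ Y=2)`. -/
noncomputable def fpr {Ω : Type*} [MeasurableSpace Ω] (μ : Measure Ω) (F Y : Ω → ℕ) : ℝ :=
  pr μ {ω | F ω = 1 ∧ Y ω = 2} / pr μ {ω | Y ω = 2}

/-- The Correlated Agreement correlation matrix:
`Δ(F,G)(k,l) = ℙ(F=k, G=l) − ℙ(F=k)·ℙ(G=l)`. -/
noncomputable def caDelta {Ω : Type*} [MeasurableSpace Ω] (μ : Measure Ω)
    (F G : Ω → ℕ) (k l : ℕ) : ℝ :=
  pr μ {ω | F ω = k ∧ G ω = l} - pr μ {ω | F ω = k} * pr μ {ω | G ω = l}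

/-- The expected Correlated Agreement score of `F` against `G`:
`S̄(F,G) = ℙ(F = G) − ℙ(F=1)ℙ(G=1) − ℙ(F=2)ℙ(G=2)`. -/
noncomputable def caScore {Ω : Type*} [MeasurableSpace Ω] (μ : Measure Ω)
    (F G : Ω → ℕ) : ℝ :=
  pr μ {ω | F ω = G ω} - pr μ {ω | F ω = 1} * pr μ {ω | G ω = 1}
    - pr μ {ω | F ω = 2} * pr μ {ω | G ω = 2}

/-- `F` and `G` are conditionally independent given `Y`:
`ℙ(F=k, G=l ∣ Y=y) = ℙ(F=k ∣ Y=y)·ℙ(G=l ∣ Y=y)` for all `k,l,y ∈ {1,2}`. -/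
def CondIndepGiven {Ω : Type*} [MeasurableSpace Ω] (μ : Measure Ω)
    (F G Y : Ω → ℕ) : Prop :=
  ∀ k l y : ℕ, k ∈ ({1, 2} : Set ℕ) → l ∈ ({1, 2} : Set ℕ) → y ∈ ({1, 2} : Set ℕ) →
    pr μ {ω | F ω = k ∧ G ω = l ∧ Y ω = y} / pr μ {ω | Y ω = y} =
      (pr μ {ω | F ω = k ∧ Y ω = y} / pr μ {ω | Y ω = y}) *
        (pr μ {ω | G ω = l ∧ Y ω = y} / pr μ {ω | Y ω = y})

/-! By conditional independence, `ℙ(Fi=k, Fj=l) = ∑_y ℙ(Y=y) ℙ(Fi=k ∣ Y=y) ℙ(Fj=l ∣ Y=y)`,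
and with `p = ℙ(Y=1)`, `q = ℙ(Y=2)`, `p + q = 1` this gives
`Δ(k,l) = p q (ℙ(Fi=k ∣ Y=1) − ℙ(Fi=k ∣ Y=2)) (ℙ(Fj=l ∣ Y=1) − ℙ(Fj=l ∣ Y=2))`.
For a binary label the gap `ℙ(F=k ∣ Y=1) − ℙ(F=k ∣ Y=2)` is `1 − FNR − FPR > 0` at `k = 1`
and its negative at `k = 2`, which fixes the sign of each entry. -/

section

variable {Ω : Type*} [MeasurableSpace Ω] (μ : Measure Ω)

theorem pr_eq_pr_inter_add_pr_inter [IsFiniteMeasure μ] {Y : Ω → ℕ} (hY : Measurable Y)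
    (hYbin : IsBinaryLabel Y) (s : Set Ω) :
    pr μ s = pr μ (s ∩ {ω | Y ω = 1}) + pr μ (s ∩ {ω | Y ω = 2}) := by
  have hdiff : s \ {ω | Y ω = 2} = s ∩ {ω | Y ω = 1} := by
    ext ω
    rcases hYbin ω with h | h <;> simp [h]
  have h2 : MeasurableSet {ω | Y ω = 2} := hY (measurableSet_singleton 2)
  unfold pr
  rw [← measure_inter_add_sdiff s h2, hdiff,
    ENNReal.toReal_add (measure_ne_top _ _) (measure_ne_top _ _), add_comm]

theorem pr_label_one_add_pr_label_two [IsProbabilityMeasure μ] {Y : Ω → ℕ}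
    (hY : Measurable Y) (hYbin : IsBinaryLabel Y) :
    pr μ {ω | Y ω = 1} + pr μ {ω | Y ω = 2} = 1 := by
  simpa [pr] using (pr_eq_pr_inter_add_pr_inter μ hY hYbin Set.univ).symm

noncomputable def condPr (F Y : Ω → ℕ) (k y : ℕ) : ℝ :=
  pr μ {ω | F ω = k ∧ Y ω = y} / pr μ {ω | Y ω = y}

noncomputable def condPrGap (F Y : Ω → ℕ) (k : ℕ) : ℝ :=
  condPr μ F Y k 1 - condPr μ F Y k 2

theorem condPr_one_add_condPr_two [IsFiniteMeasure μ] {F Y : Ω → ℕ}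
    (hF : Measurable F) (hFbin : IsBinaryLabel F) {y : ℕ} (hy : pr μ {ω | Y ω = y} ≠ 0) :
    condPr μ F Y 1 y + condPr μ F Y 2 y = 1 := by
  rw [condPr, condPr, ← add_div, div_eq_one_iff_eq hy]
  have h := pr_eq_pr_inter_add_pr_inter μ hF hFbin {ω | Y ω = y}
  rw [Set.inter_comm, Set.inter_comm {ω | Y ω = y}] at h
  exact h.symm

theorem condPrGap_one [IsFiniteMeasure μ] {F Y : Ω → ℕ} (hF : Measurable F)
    (hFbin : IsBinaryLabel F) (h1 : pr μ {ω | Y ω = 1} ≠ 0) :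
    condPrGap μ F Y 1 = 1 - fnr μ F Y - fpr μ F Y := by
  have h := condPr_one_add_condPr_two μ hF hFbin h1
  rw [condPrGap, fnr, fpr, ← condPr, ← condPr]
  linarith

theorem condPrGap_two [IsFiniteMeasure μ] {F Y : Ω → ℕ} (hF : Measurable F)
    (hFbin : IsBinaryLabel F) (h1 : pr μ {ω | Y ω = 1} ≠ 0) (h2 : pr μ {ω | Y ω = 2} ≠ 0) :
    condPrGap μ F Y 2 = -condPrGap μ F Y 1 := by
  have hy1 := condPr_one_add_condPr_two μ hF hFbin h1
  have hy2 := condPr_one_add_condPr_two μ hF hFbin h2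
  rw [condPrGap, condPrGap]
  linarith

theorem caDelta_eq_mul_condPrGap [IsProbabilityMeasure μ] {F G Y : Ω → ℕ}
    (hY : Measurable Y) (hYbin : IsBinaryLabel Y) (hci : CondIndepGiven μ F G Y)
    (h1 : pr μ {ω | Y ω = 1} ≠ 0) (h2 : pr μ {ω | Y ω = 2} ≠ 0)
    {k l : ℕ} (hk : k ∈ ({1, 2} : Set ℕ)) (hl : l ∈ ({1, 2} : Set ℕ)) :
    caDelta μ F G k l = pr μ {ω | Y ω = 1} * pr μ {ω | Y ω = 2} *
      condPrGap μ F Y k * condPrGap μ G Y l := by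
  have hsplit := pr_eq_pr_inter_add_pr_inter μ hY hYbin
  have hjoint : ∀ y ∈ ({1, 2} : Set ℕ), pr μ {ω | Y ω = y} ≠ 0 →
      pr μ ({ω | F ω = k ∧ G ω = l} ∩ {ω | Y ω = y}) =
        pr μ {ω | Y ω = y} * condPr μ F Y k y * condPr μ G Y l y := by
    intro y hy hne
    rw [mul_assoc, condPr, condPr, ← hci k l y hk hl hy, mul_div_cancel₀ _ hne, Set.ofPred_and,
      Set.inter_assoc, ← Set.ofPred_and, ← Set.ofPred_and]
  have hmarg : ∀ (H : Ω → ℕ) (m : ℕ), pr μ {ω | H ω = m} =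
      pr μ {ω | Y ω = 1} * condPr μ H Y m 1 + pr μ {ω | Y ω = 2} * condPr μ H Y m 2 := by
    intro H m
    rw [condPr, condPr, mul_div_cancel₀ _ h1, mul_div_cancel₀ _ h2]
    exact hsplit _
  have hpq := pr_label_one_add_pr_label_two μ hY hYbin
  rw [caDelta, hsplit, hjoint 1 (.inl rfl) h1, hjoint 2 (.inr rfl) h2, hmarg F, hmarg G,
    condPrGap, condPrGap]
  linear_combination (-(pr μ {ω | Y ω = 1} * condPr μ F Y k 1 * condPr μ G Y l 1
    + pr μ {ω | Y ω = 2} * condPr μ F Y k 2 * condPr μ G Y l 2)) * hpq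

end

/-- if `F_i` and `F_j` are conditionally independent given `Y`, and both
are informative (`FNR + FPR < 1`), then `Sgn(Δ(F_i,F_j))` is the 2×2 identity matrix. -/
theorem sgn_delta_identity_between_peers
    {Ω : Type*} [MeasurableSpace Ω] (μ : Measure Ω) [IsProbabilityMeasure μ]
    (Fi Fj Y : Ω → ℕ)
    (hFimeas : Measurable Fi) (hFjmeas : Measurable Fj) (hYmeas : Measurable Y)
    (hFibin : IsBinaryLabel Fi) (hFjbin : IsBinaryLabel Fj) (hYbin : IsBinaryLabel Y)
    (hY1pos : 0 < pr μ {ω | Y ω = 1}) (hY1lt : pr μ {ω | Y ω = 1} < 1)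
    (hci : CondIndepGiven μ Fi Fj Y)
    (hinfi : fnr μ Fi Y + fpr μ Fi Y < 1)
    (hinfj : fnr μ Fj Y + fpr μ Fj Y < 1) :
    0 < caDelta μ Fi Fj 1 1 ∧ 0 < caDelta μ Fi Fj 2 2 ∧
      caDelta μ Fi Fj 1 2 < 0 ∧ caDelta μ Fi Fj 2 1 < 0 := by
  have hpq := pr_label_one_add_pr_label_two μ hYmeas hYbin
  have hY1 : pr μ {ω | Y ω = 1} ≠ 0 := hY1pos.ne'
  have hY2pos : 0 < pr μ {ω | Y ω = 2} := by linarith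
  have hΔ {k l : ℕ} (hk : k ∈ ({1, 2} : Set ℕ)) (hl : l ∈ ({1, 2} : Set ℕ)) :=
    caDelta_eq_mul_condPrGap μ hYmeas hYbin hci hY1 hY2pos.ne' hk hl
  have hJi : 0 < condPrGap μ Fi Y 1 := by rw [condPrGap_one μ hFimeas hFibin hY1]; linarith
  have hJj : 0 < condPrGap μ Fj Y 1 := by rw [condPrGap_one μ hFjmeas hFjbin hY1]; linarith
  rw [hΔ (.inl rfl) (.inl rfl), hΔ (.inr rfl) (.inr rfl), hΔ (.inl rfl) (.inr rfl),
    hΔ (.inr rfl) (.inl rfl), condPrGap_two μ hFimeas hFibin hY1 hY2pos.ne',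
    condPrGap_two μ hFjmeas hFjbin hY1 hY2pos.ne']
  have hpos : 0 < pr μ {ω | Y ω = 1} * pr μ {ω | Y ω = 2} *
      condPrGap μ Fi Y 1 * condPrGap μ Fj Y 1 := by positivity
  refine ⟨hpos, ?_, ?_, ?_⟩ <;> linarith
end

section
/- If F_i and F_j are conditionally independent given Y, then for all k, l ∈ {1,2}: Δ(F_i,F_j)(k,l) = (ℙ(F_j=l ∣ Y=1) − ℙ(F_j=l ∣ Y=2)) · Δ(F_i,Y)(k,1). -/
open MeasureTheory

lemma pr_split {Ω : Type*} [MeasurableSpace Ω] (μ : Measure Ω) [IsProbabilityMeasure μ]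
    (Y : Ω → ℕ) (hY : Measurable Y) (hYbin : IsBinaryLabel Y)
    (A : Set Ω) (hA : MeasurableSet A) :
    pr μ A = pr μ (A ∩ {ω | Y ω = 1}) + pr μ (A ∩ {ω | Y ω = 2}) := by
  have hU : A = (A ∩ {ω | Y ω = 1}) ∪ (A ∩ {ω | Y ω = 2}) := by
    ext ω; rcases hYbin ω with h | h <;> simp [h]
  have hdisj : Disjoint (A ∩ {ω | Y ω = 1}) (A ∩ {ω | Y ω = 2}) := by
    rw [Set.disjoint_iff]
    rintro ω ⟨⟨-, h1⟩, ⟨-, h2⟩⟩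
    simp only [Set.mem_setOf_eq] at h1 h2
    omega
  have hm2 : MeasurableSet (A ∩ {ω | Y ω = 2}) :=
    hA.inter (hY (measurableSet_singleton 2))
  have hmeq : μ A = μ (A ∩ {ω | Y ω = 1}) + μ (A ∩ {ω | Y ω = 2}) := by
    conv_lhs => rw [hU]
    exact measure_union hdisj hm2
  rw [pr, hmeq, ENNReal.toReal_add (measure_ne_top _ _) (measure_ne_top _ _)]
  rfl

/-- if `F_i` and `F_j` are conditionally independent given `Y`, then for
all `k, l ∈ {1,2}`:
`Δ(F_i,F_j)(k,l) = (ℙ(F_j=l ∣ Y=1) − ℙ(F_j=l ∣ Y=2)) · Δ(F_i,Y)(k,1)`. -/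
theorem delta_peer_factorization
    {Ω : Type*} [MeasurableSpace Ω] (μ : Measure Ω) [IsProbabilityMeasure μ]
    (Fi Fj Y : Ω → ℕ)
    (hFimeas : Measurable Fi) (hFjmeas : Measurable Fj) (hYmeas : Measurable Y)
    (hFibin : IsBinaryLabel Fi) (hFjbin : IsBinaryLabel Fj) (hYbin : IsBinaryLabel Y)
    (hY1pos : 0 < pr μ {ω | Y ω = 1}) (hY1lt : pr μ {ω | Y ω = 1} < 1)
    (hci : CondIndepGiven μ Fi Fj Y) :
    ∀ k l : ℕ, k ∈ ({1, 2} : Set ℕ) → l ∈ ({1, 2} : Set ℕ) →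
      caDelta μ Fi Fj k l =
        (pr μ {ω | Fj ω = l ∧ Y ω = 1} / pr μ {ω | Y ω = 1} -
            pr μ {ω | Fj ω = l ∧ Y ω = 2} / pr μ {ω | Y ω = 2}) *
          caDelta μ Fi Y k 1 := by
  intro k l hk hl
  have hp : pr μ {ω | Y ω = 1} ≠ 0 := ne_of_gt hY1pos
  have huniv : pr μ (Set.univ : Set Ω) = 1 := by simp [pr]
  have hsum : pr μ ({ω | Y ω = 1} : Set Ω) + pr μ ({ω | Y ω = 2} : Set Ω) = 1 := by
    have h := pr_split μ Y hYmeas hYbin Set.univ MeasurableSet.univ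
    simpa [huniv] using h.symm
  have hq : (0:ℝ) < pr μ {ω | Y ω = 2} := by linarith
  have hq' : pr μ {ω | Y ω = 2} ≠ 0 := ne_of_gt hq
  have mFi : MeasurableSet {ω | Fi ω = k} := hFimeas (measurableSet_singleton k)
  have mFj : MeasurableSet {ω | Fj ω = l} := hFjmeas (measurableSet_singleton l)
  have hsetA : ∀ y : ℕ, ({ω | Fi ω = k} ∩ {ω | Y ω = y}) = {ω | Fi ω = k ∧ Y ω = y} := by
    intro y; ext ω; simp [Set.mem_setOf_eq]
  have hsetB : ∀ y : ℕ, ({ω | Fj ω = l} ∩ {ω | Y ω = y}) = {ω | Fj ω = l ∧ Y ω = y} := by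
    intro y; ext ω; simp [Set.mem_setOf_eq]
  have hsetC : ∀ y : ℕ, (({ω | Fi ω = k ∧ Fj ω = l} : Set Ω) ∩ {ω | Y ω = y})
      = {ω | Fi ω = k ∧ Fj ω = l ∧ Y ω = y} := by
    intro y; ext ω; simp [Set.mem_setOf_eq, and_assoc]
  have hA : pr μ {ω | Fi ω = k} =
      pr μ {ω | Fi ω = k ∧ Y ω = 1} + pr μ {ω | Fi ω = k ∧ Y ω = 2} := by
    have h := pr_split μ Y hYmeas hYbin {ω | Fi ω = k} mFi
    rwa [hsetA 1, hsetA 2] at h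
  have hB : pr μ {ω | Fj ω = l} =
      pr μ {ω | Fj ω = l ∧ Y ω = 1} + pr μ {ω | Fj ω = l ∧ Y ω = 2} := by
    have h := pr_split μ Y hYmeas hYbin {ω | Fj ω = l} mFj
    rwa [hsetB 1, hsetB 2] at h
  have hC : pr μ {ω | Fi ω = k ∧ Fj ω = l} =
      pr μ {ω | Fi ω = k ∧ Fj ω = l ∧ Y ω = 1} +
        pr μ {ω | Fi ω = k ∧ Fj ω = l ∧ Y ω = 2} := by
    have h := pr_split μ Y hYmeas hYbin {ω | Fi ω = k ∧ Fj ω = l}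
      (by exact mFi.inter mFj)
    rwa [hsetC 1, hsetC 2] at h
  have hciY : ∀ y : ℕ, pr μ {ω | Y ω = y} ≠ 0 → y ∈ ({1, 2} : Set ℕ) →
      pr μ {ω | Fi ω = k ∧ Fj ω = l ∧ Y ω = y} =
        pr μ {ω | Fi ω = k ∧ Y ω = y} * pr μ {ω | Fj ω = l ∧ Y ω = y} /
          pr μ {ω | Y ω = y} := by
    intro y hy hymem
    have h := hci k l y hk hl hymem
    calc pr μ {ω | Fi ω = k ∧ Fj ω = l ∧ Y ω = y}
        = pr μ {ω | Fi ω = k ∧ Fj ω = l ∧ Y ω = y} / pr μ {ω | Y ω = y}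
            * pr μ {ω | Y ω = y} := (div_mul_cancel₀ _ hy).symm
      _ = (pr μ {ω | Fi ω = k ∧ Y ω = y} / pr μ {ω | Y ω = y}) *
            (pr μ {ω | Fj ω = l ∧ Y ω = y} / pr μ {ω | Y ω = y}) *
            pr μ {ω | Y ω = y} := by rw [h]
      _ = pr μ {ω | Fi ω = k ∧ Y ω = y} * pr μ {ω | Fj ω = l ∧ Y ω = y} /
            pr μ {ω | Y ω = y} := by field_simp
  have hci1 := hciY 1 hp (by simp)
  have hci2 := hciY 2 hq' (by simp)
  have hq1 : pr μ ({ω | Y ω = 2} : Set Ω) = 1 - pr μ {ω | Y ω = 1} := by linarith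
  rw [caDelta, caDelta, hC, hci1, hci2, hA, hB, hq1]
  have h1p : (1:ℝ) - pr μ {ω | Y ω = 1} ≠ 0 := by
    rw [hq1] at hq'; exact hq'
  field_simp
  ring
end

section
/- If F and F' are {1,2}-valued random variables that are conditionally independent given Y, then the expected Correlated Agreement score of F against the peer reference F' is an affine rescaling of its score against the ground truth: S̄(F, F') = (1 − FNR(F') − FPR(F')) · S̄(F, Y). -/
open MeasureTheory

/-! For `{1,2}`-valued labels the CA score is twice the `(1,1)` entry of the correlation matrix,
`S̄(F,G) = 2 Δ(F,G)(1,1)`, so it suffices to compare `Δ(F,F')(1,1)` with `Δ(F,Y)(1,1)`.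
Splitting along `Y` and using conditional independence,
`ℙ(F=1, F'=1) = ∑_y ℙ(F=1, Y=y) ℙ(F'=1, Y=y) / ℙ(Y=y)`. Writing `b_y = ℙ(F'=1, Y=y)` and
`q_y = ℙ(Y=y)`, the rescaling factor is `b₁/q₁ - b₂/q₂ = 1 - FNR(F') - FPR(F')`, and what remains
is field arithmetic with `q₁ + q₂ = 1`. -/

namespace IsBinaryLabel

variable {Ω : Type*} [MeasurableSpace Ω] (μ : Measure Ω) {F G : Ω → ℕ}

theorem pr_and_add_pr_and [IsFiniteMeasure μ] (hG : IsBinaryLabel G) (hGm : Measurable G)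
    (p : Ω → Prop) :
    pr μ {ω | p ω ∧ G ω = 1} + pr μ {ω | p ω ∧ G ω = 2} = pr μ {ω | p ω} := by
  change μ.real _ + μ.real _ = μ.real _
  rw [← measureReal_inter_add_sdiff (s := {ω | p ω}) (hGm (measurableSet_singleton 1))]
  congr 2
  ext ω
  rcases hG ω with h | h <;> simp [h]

theorem pr_and_add_pr_and' [IsFiniteMeasure μ] (hG : IsBinaryLabel G) (hGm : Measurable G)
    (p : Ω → Prop) :
    pr μ {ω | G ω = 1 ∧ p ω} + pr μ {ω | G ω = 2 ∧ p ω} = pr μ {ω | p ω} := by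
  simpa only [and_comm] using hG.pr_and_add_pr_and μ hGm p

theorem pr_eq_two_eq_one_sub [IsProbabilityMeasure μ] (hG : IsBinaryLabel G)
    (hGm : Measurable G) : pr μ {ω | G ω = 2} = 1 - pr μ {ω | G ω = 1} := by
  have := hG.pr_and_add_pr_and μ hGm (fun _ => True)
  simp only [true_and, Set.ofPred_true] at this
  rw [eq_sub_iff_add_eq', this]
  simp [pr]

theorem pr_agree_eq_add [IsFiniteMeasure μ] (hF : IsBinaryLabel F) (hFm : Measurable F) :
    pr μ {ω | F ω = G ω} = pr μ {ω | F ω = 1 ∧ G ω = 1} + pr μ {ω | F ω = 2 ∧ G ω = 2} := by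
  rw [← hF.pr_and_add_pr_and' μ hFm (fun ω => F ω = G ω)]
  congr 2 <;> ext ω <;> simp only [Set.mem_ofPred_eq] <;> omega

end IsBinaryLabel

theorem caScore_eq_two_mul_caDelta {Ω : Type*} [MeasurableSpace Ω] (μ : Measure Ω)
    [IsProbabilityMeasure μ] {F G : Ω → ℕ} (hF : IsBinaryLabel F) (hG : IsBinaryLabel G)
    (hFm : Measurable F) (hGm : Measurable G) :
    caScore μ F G = 2 * caDelta μ F G 1 1 := by
  have hF₁ := hG.pr_and_add_pr_and μ hGm (fun ω => F ω = 1)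
  have hG₂ := hF.pr_and_add_pr_and' μ hFm (fun ω => G ω = 2)
  rw [hG.pr_eq_two_eq_one_sub μ hGm] at hG₂
  rw [caScore, caDelta, hF.pr_agree_eq_add μ hFm, hF.pr_eq_two_eq_one_sub μ hFm,
    hG.pr_eq_two_eq_one_sub μ hGm]
  linear_combination hG₂ - hF₁

theorem CondIndepGiven.pr_and_and_eq {Ω : Type*} [MeasurableSpace Ω] {μ : Measure Ω}
    {F G Y : Ω → ℕ} (h : CondIndepGiven μ F G Y) {k l y : ℕ} (hk : k ∈ ({1, 2} : Set ℕ))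
    (hl : l ∈ ({1, 2} : Set ℕ)) (hy : y ∈ ({1, 2} : Set ℕ)) (hq : pr μ {ω | Y ω = y} ≠ 0) :
    pr μ {ω | F ω = k ∧ G ω = l ∧ Y ω = y} =
      pr μ {ω | F ω = k ∧ Y ω = y} * pr μ {ω | G ω = l ∧ Y ω = y} / pr μ {ω | Y ω = y} := by
  have := h k l y hk hl hy
  field_simp at this ⊢
  linear_combination this

/-- if `F` and `F'` are conditionally independent given `Y`, then the
expected CA score of `F` against the peer reference `F'` is an affine rescaling of its
score against the ground truth: `S̄(F,F') = (1 − FNR(F') − FPR(F')) · S̄(F,Y)`. -/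
theorem ca_score_peer_affine_rescaling
    {Ω : Type*} [MeasurableSpace Ω] (μ : Measure Ω) [IsProbabilityMeasure μ]
    (F F' Y : Ω → ℕ)
    (hFmeas : Measurable F) (hF'meas : Measurable F') (hYmeas : Measurable Y)
    (hFbin : IsBinaryLabel F) (hF'bin : IsBinaryLabel F') (hYbin : IsBinaryLabel Y)
    (hY1pos : 0 < pr μ {ω | Y ω = 1}) (hY1lt : pr μ {ω | Y ω = 1} < 1)
    (hci : CondIndepGiven μ F F' Y) :
    caScore μ F F' = (1 - fnr μ F' Y - fpr μ F' Y) * caScore μ F Y := by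
  have hq₂ := hYbin.pr_eq_two_eq_one_sub μ hYmeas
  have hq₁ne : pr μ {ω | Y ω = 1} ≠ 0 := hY1pos.ne'
  have hq₂ne : pr μ {ω | Y ω = 2} ≠ 0 := by rw [hq₂]; linarith
  have hjoint : pr μ {ω | F ω = 1 ∧ F' ω = 1} =
      pr μ {ω | F ω = 1 ∧ F' ω = 1 ∧ Y ω = 1} + pr μ {ω | F ω = 1 ∧ F' ω = 1 ∧ Y ω = 2} := by
    simpa only [and_assoc] using
      (hYbin.pr_and_add_pr_and μ hYmeas (fun ω => F ω = 1 ∧ F' ω = 1)).symm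
  have hfnr : pr μ {ω | F' ω = 2 ∧ Y ω = 1} =
      pr μ {ω | Y ω = 1} - pr μ {ω | F' ω = 1 ∧ Y ω = 1} :=
    eq_sub_of_add_eq' (hF'bin.pr_and_add_pr_and' μ hF'meas (fun ω => Y ω = 1))
  rw [caScore_eq_two_mul_caDelta μ hFbin hF'bin hFmeas hF'meas,
    caScore_eq_two_mul_caDelta μ hFbin hYbin hFmeas hYmeas, caDelta, caDelta, fnr, fpr, hfnr,
    hjoint, hci.pr_and_and_eq (by simp) (by simp) (by simp) hq₁ne,
    hci.pr_and_and_eq (by simp) (by simp) (by simp) hq₂ne,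
    ← hYbin.pr_and_add_pr_and μ hYmeas (fun ω => F ω = 1),
    ← hYbin.pr_and_add_pr_and μ hYmeas (fun ω => F' ω = 1)]
  field_simp
  rw [hq₂]
  ring
end

section
/- Let γ ∈ [0,1], let F, F₁, F₂ be {1,2}-valued random variables such that F is conditionally independent of F₁ given Y and conditionally independent of F₂ given Y, and let B be a {0,1}-valued Bernoulli(γ) random variable independent of (Y, F, F₁, F₂). Define the mixed reference F̃ := F₁ on {B=0} and F̃ := F₂ on {B=1} (modeling a reference drawn from a population with a 1−γ fraction of truthful agents holding F₁ and a γ fraction of adversaries holding F₂). Then S̄(F, F̃) = ((1−γ)·(1 − FNR(F₁) − FPR(F₁)) + γ·(1 − FNR(F₂) − FPR(F₂))) · S̄(F, Y). -/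
open MeasureTheory

section Helpers
variable {Ω : Type*} [MeasurableSpace Ω] (μ : Measure Ω) [IsProbabilityMeasure μ]

omit [IsProbabilityMeasure μ] in
lemma pr_congr {s t : Set Ω} (h : s = t) : pr μ s = pr μ t := by rw [h]

lemma pr_union_disj {s t : Set Ω} (ht : MeasurableSet t) (hd : Disjoint s t) :
    pr μ (s ∪ t) = pr μ s + pr μ t := by
  unfold pr
  rw [measure_union hd ht, ENNReal.toReal_add (measure_ne_top μ s) (measure_ne_top μ t)]

lemma pr_split_s12 (P : Ω → Prop) (H : Ω → ℕ) (v w : ℕ) (hvw : v ≠ w)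
    (hH : ∀ ω, H ω = v ∨ H ω = w)
    (h2 : MeasurableSet {ω | P ω ∧ H ω = w}) :
    pr μ {ω | P ω} = pr μ {ω | P ω ∧ H ω = v} + pr μ {ω | P ω ∧ H ω = w} := by
  rw [← pr_union_disj μ h2 ?_]
  · apply pr_congr
    ext ω
    simp only [Set.mem_setOf_eq, Set.mem_union]
    constructor
    · intro hp; rcases hH ω with h | h
      exacts [Or.inl ⟨hp, h⟩, Or.inr ⟨hp, h⟩]
    · rintro (⟨hp, _⟩ | ⟨hp, _⟩) <;> exact hp
  · rw [Set.disjoint_left]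
    rintro ω ⟨_, h1⟩ ⟨_, h2'⟩
    exact hvw (h1 ▸ h2' ▸ rfl)

lemma pr_univ : pr μ Set.univ = 1 := by simp [pr]

lemma pr_total (H : Ω → ℕ) (v w : ℕ) (hvw : v ≠ w)
    (hH : ∀ ω, H ω = v ∨ H ω = w)
    (h2 : MeasurableSet {ω | H ω = w}) :
    pr μ {ω | H ω = v} + pr μ {ω | H ω = w} = 1 := by
  have := pr_split_s12 μ (fun _ => True) H v w hvw hH (by simpa using h2)
  simp only [Set.setOf_true, true_and] at this
  rw [← this, pr_univ]

end Helpers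

lemma setOf_eqfun_and_left {Ω : Type*} (F G : Ω → ℕ) (k : ℕ) :
    {ω | F ω = G ω ∧ F ω = k} = {ω | F ω = k ∧ G ω = k} := by
  ext ω
  constructor
  · rintro ⟨h1, h2⟩; exact ⟨h2, h1.symm.trans h2⟩
  · rintro ⟨h1, h2⟩; exact ⟨h1.trans h2.symm, h1⟩

lemma measurableSet_eqfun {Ω : Type*} [MeasurableSpace Ω] {F G : Ω → ℕ}
    (hF : Measurable F) (hG : Measurable G) : MeasurableSet {ω | F ω = G ω} := by
  have h : {ω | F ω = G ω} = ⋃ k, ({ω | F ω = k} ∩ {ω | G ω = k}) := by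
    ext ω
    simp only [Set.mem_setOf_eq, Set.mem_iUnion, Set.mem_inter_iff]
    exact ⟨fun h => ⟨F ω, rfl, h.symm⟩, fun ⟨k, h1, h2⟩ => h1.trans h2.symm⟩
  rw [h]
  exact MeasurableSet.iUnion fun k =>
    (hF (measurableSet_singleton k)).inter (hG (measurableSet_singleton k))

lemma ca_condindep {Ω : Type*} [MeasurableSpace Ω] (μ : Measure Ω) [IsProbabilityMeasure μ]
    (F G Y : Ω → ℕ) (hF : Measurable F) (hG : Measurable G) (hY : Measurable Y)
    (hFbin : IsBinaryLabel F) (hGbin : IsBinaryLabel G) (hYbin : IsBinaryLabel Y)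
    (hp : 0 < pr μ {ω | Y ω = 1}) (hp1 : pr μ {ω | Y ω = 1} < 1)
    (hci : CondIndepGiven μ F G Y) :
    caScore μ F G = (1 - fnr μ G Y - fpr μ G Y) * caScore μ F Y := by
  have mF : ∀ k : ℕ, MeasurableSet {ω | F ω = k} := fun k => hF (measurableSet_singleton k)
  have mG : ∀ k : ℕ, MeasurableSet {ω | G ω = k} := fun k => hG (measurableSet_singleton k)
  have mY : ∀ k : ℕ, MeasurableSet {ω | Y ω = k} := fun k => hY (measurableSet_singleton k)
  set p := pr μ {ω | Y ω = 1} with hpdef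
  have hq : pr μ {ω | Y ω = 2} = 1 - p := by
    have := pr_total μ Y 1 2 (by norm_num) hYbin (mY 2)
    linarith
  have hpne : p ≠ 0 := ne_of_gt hp
  have hqne : (1 : ℝ) - p ≠ 0 := by linarith
  have splitY : ∀ (H : Ω → ℕ), Measurable H → ∀ k : ℕ,
      pr μ {ω | H ω = k} = pr μ {ω | H ω = k ∧ Y ω = 1} + pr μ {ω | H ω = k ∧ Y ω = 2} :=
    fun H hH k => pr_split_s12 μ (fun ω => H ω = k) Y 1 2 (by norm_num) hYbin
      ((hH (measurableSet_singleton k)).inter (mY 2))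
  have split2 : ∀ (H : Ω → ℕ), Measurable H → IsBinaryLabel H → ∀ y : ℕ,
      pr μ {ω | H ω = 2 ∧ Y ω = y} = pr μ {ω | Y ω = y} - pr μ {ω | H ω = 1 ∧ Y ω = y} := by
    intro H hH hHbin y
    have h := pr_split_s12 μ (fun ω => Y ω = y) H 1 2 (by norm_num) hHbin
      ((mY y).inter (hH (measurableSet_singleton 2)))
    have c1 : pr μ {ω | Y ω = y ∧ H ω = 1} = pr μ {ω | H ω = 1 ∧ Y ω = y} :=
      pr_congr μ (by ext ω; exact and_comm)
    have c2 : pr μ {ω | Y ω = y ∧ H ω = 2} = pr μ {ω | H ω = 2 ∧ Y ω = y} :=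
      pr_congr μ (by ext ω; exact and_comm)
    rw [c1, c2] at h
    linarith
  set a1 := pr μ {ω | F ω = 1 ∧ Y ω = 1} with ha1
  set a2 := pr μ {ω | F ω = 1 ∧ Y ω = 2} with ha2
  set b1 := pr μ {ω | G ω = 1 ∧ Y ω = 1} with hb1
  set b2 := pr μ {ω | G ω = 1 ∧ Y ω = 2} with hb2
  have eF21 : pr μ {ω | F ω = 2 ∧ Y ω = 1} = p - a1 := split2 F hF hFbin 1
  have eF22 : pr μ {ω | F ω = 2 ∧ Y ω = 2} = (1 - p) - a2 := by rw [split2 F hF hFbin 2, hq]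
  have eG21 : pr μ {ω | G ω = 2 ∧ Y ω = 1} = p - b1 := split2 G hG hGbin 1
  have eG22 : pr μ {ω | G ω = 2 ∧ Y ω = 2} = (1 - p) - b2 := by rw [split2 G hG hGbin 2, hq]
  have eF1 : pr μ {ω | F ω = 1} = a1 + a2 := splitY F hF 1
  have eF2 : pr μ {ω | F ω = 2} = (p - a1) + ((1 - p) - a2) := by
    rw [splitY F hF 2, eF21, eF22]
  have eG1 : pr μ {ω | G ω = 1} = b1 + b2 := splitY G hG 1
  have eG2 : pr μ {ω | G ω = 2} = (p - b1) + ((1 - p) - b2) := by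
    rw [splitY G hG 2, eG21, eG22]
  -- triple probabilities
  have trip : ∀ k l y : ℕ, k ∈ ({1,2} : Set ℕ) → l ∈ ({1,2} : Set ℕ) → y ∈ ({1,2} : Set ℕ) →
      pr μ {ω | F ω = k ∧ G ω = l ∧ Y ω = y} =
        pr μ {ω | F ω = k ∧ Y ω = y} * pr μ {ω | G ω = l ∧ Y ω = y} / pr μ {ω | Y ω = y} := by
    intro k l y hk hl hy
    have h := hci k l y hk hl hy
    have hyne : pr μ {ω | Y ω = y} ≠ 0 := by
      rcases hy with hy | hy
      · subst hy; exact hpne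
      · simp only [Set.mem_singleton_iff] at hy; subst hy; rw [hq]; exact hqne
    have h2 : pr μ {ω | F ω = k ∧ G ω = l ∧ Y ω = y} =
        (pr μ {ω | F ω = k ∧ G ω = l ∧ Y ω = y} / pr μ {ω | Y ω = y}) * pr μ {ω | Y ω = y} :=
      (div_mul_cancel₀ _ hyne).symm
    rw [h2, h]
    field_simp
  -- pr{F = G}
  have eFG : pr μ {ω | F ω = G ω} =
      (a1 * b1 / p + a2 * b2 / (1 - p)) +
        ((p - a1) * (p - b1) / p + ((1 - p) - a2) * ((1 - p) - b2) / (1 - p)) := by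
    have h0 : pr μ {ω | F ω = G ω} =
        pr μ {ω | F ω = G ω ∧ F ω = 1} + pr μ {ω | F ω = G ω ∧ F ω = 2} :=
      pr_split_s12 μ (fun ω => F ω = G ω) F 1 2 (by norm_num) hFbin
        ((measurableSet_eqfun hF hG).inter (mF 2))
    have c1 : pr μ {ω | F ω = G ω ∧ F ω = 1} =
        pr μ {ω | (F ω = 1 ∧ G ω = 1) ∧ Y ω = 1} + pr μ {ω | (F ω = 1 ∧ G ω = 1) ∧ Y ω = 2} := by
      rw [pr_congr μ (setOf_eqfun_and_left F G 1)]
      exact pr_split_s12 μ (fun ω => F ω = 1 ∧ G ω = 1) Y 1 2 (by norm_num) hYbin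
        (((mF 1).inter (mG 1)).inter (mY 2))
    have c2 : pr μ {ω | F ω = G ω ∧ F ω = 2} =
        pr μ {ω | (F ω = 2 ∧ G ω = 2) ∧ Y ω = 1} + pr μ {ω | (F ω = 2 ∧ G ω = 2) ∧ Y ω = 2} := by
      rw [pr_congr μ (setOf_eqfun_and_left F G 2)]
      exact pr_split_s12 μ (fun ω => F ω = 2 ∧ G ω = 2) Y 1 2 (by norm_num) hYbin
        (((mF 2).inter (mG 2)).inter (mY 2))
    have assoc : ∀ k l y : ℕ, pr μ {ω | (F ω = k ∧ G ω = l) ∧ Y ω = y} =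
        pr μ {ω | F ω = k ∧ G ω = l ∧ Y ω = y} :=
      fun k l y => pr_congr μ (by ext ω; exact and_assoc)
    rw [h0, c1, c2, assoc, assoc, assoc, assoc,
      trip 1 1 1 (by simp) (by simp) (by simp), trip 1 1 2 (by simp) (by simp) (by simp),
      trip 2 2 1 (by simp) (by simp) (by simp), trip 2 2 2 (by simp) (by simp) (by simp),
      eF21, eF22, eG21, eG22, hq]
  -- pr{F = Y}
  have eFY : pr μ {ω | F ω = Y ω} = a1 + ((1 - p) - a2) := by
    have h0 : pr μ {ω | F ω = Y ω} =
        pr μ {ω | F ω = Y ω ∧ F ω = 1} + pr μ {ω | F ω = Y ω ∧ F ω = 2} :=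
      pr_split_s12 μ (fun ω => F ω = Y ω) F 1 2 (by norm_num) hFbin
        ((measurableSet_eqfun hF hY).inter (mF 2))
    have c1 : pr μ {ω | F ω = Y ω ∧ F ω = 1} = a1 :=
      pr_congr μ (setOf_eqfun_and_left F Y 1)
    have c2 : pr μ {ω | F ω = Y ω ∧ F ω = 2} = (1 - p) - a2 :=
      (pr_congr μ (setOf_eqfun_and_left F Y 2)).trans eF22
    rw [h0, c1, c2]
  have efnr : fnr μ G Y = (p - b1) / p := by
    simp only [fnr]
    rw [eG21]
  have efpr : fpr μ G Y = b2 / (1 - p) := by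
    simp only [fpr]
    rw [hq]
  simp only [caScore]
  rw [eFG, eFY, eF1, eF2, eG1, eG2, efnr, efpr, hq]
  field_simp
  ring

lemma ca_mix {Ω : Type*} [MeasurableSpace Ω] (μ : Measure Ω) [IsProbabilityMeasure μ]
    (γ : ℝ) (F F₁ F₂ Y B : Ω → ℕ)
    (hF : Measurable F) (hF₁ : Measurable F₁) (hF₂ : Measurable F₂) (hY : Measurable Y)
    (hB : Measurable B)
    (hB01 : ∀ ω, B ω = 0 ∨ B ω = 1)
    (hBern : pr μ {ω | B ω = 1} = γ)
    (hBindep : ProbabilityTheory.IndepFun B (fun ω => (Y ω, F ω, F₁ ω, F₂ ω)) μ) :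
    caScore μ F (fun ω => if B ω = 0 then F₁ ω else F₂ ω) =
      (1 - γ) * caScore μ F F₁ + γ * caScore μ F F₂ := by
  have hB0 : pr μ {ω | B ω = 0} = 1 - γ := by
    have := pr_total μ B 0 1 (by norm_num) hB01 (hB (measurableSet_singleton 1))
    rw [hBern] at this
    linarith
  have key : ∀ (b : ℕ) (S : Set (ℕ × ℕ × ℕ × ℕ)),
      pr μ {ω | B ω = b ∧ (Y ω, F ω, F₁ ω, F₂ ω) ∈ S} =
        pr μ {ω | B ω = b} * pr μ {ω | (Y ω, F ω, F₁ ω, F₂ ω) ∈ S} := by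
    intro b S
    have h := (ProbabilityTheory.indepFun_iff_measure_inter_preimage_eq_mul.mp hBindep)
      {b} S (measurableSet_singleton b) ((Set.to_countable S).measurableSet)
    unfold pr
    rw [show {ω | B ω = b ∧ (Y ω, F ω, F₁ ω, F₂ ω) ∈ S} =
        B ⁻¹' {b} ∩ (fun ω => (Y ω, F ω, F₁ ω, F₂ ω)) ⁻¹' S from rfl, h, ENNReal.toReal_mul]
    rfl
  -- decomposition of events involving the mixed reference
  have mix : ∀ (P : Ω → Prop) (Q R : Ω → Prop),
      (∀ ω, B ω = 0 → (P ω ↔ Q ω)) → (∀ ω, B ω = 1 → (P ω ↔ R ω)) →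
      MeasurableSet {ω | B ω = 1 ∧ R ω} →
      pr μ {ω | P ω} = pr μ {ω | B ω = 0 ∧ Q ω} + pr μ {ω | B ω = 1 ∧ R ω} := by
    intro P Q R h0 h1 hm
    rw [← pr_union_disj μ hm ?_]
    · apply pr_congr
      ext ω
      simp only [Set.mem_setOf_eq, Set.mem_union]
      rcases hB01 ω with hb | hb
      · rw [h0 ω hb]
        simp [hb]
      · rw [h1 ω hb]
        simp [hb]
    · rw [Set.disjoint_left]
      rintro ω ⟨h1', _⟩ ⟨h2', _⟩
      omega
  have e1 : pr μ {ω | F ω = (if B ω = 0 then F₁ ω else F₂ ω)} =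
      pr μ {ω | B ω = 0} * pr μ {ω | F ω = F₁ ω} + pr μ {ω | B ω = 1} * pr μ {ω | F ω = F₂ ω} := by
    rw [mix (fun ω => F ω = (if B ω = 0 then F₁ ω else F₂ ω))
        (fun ω => F ω = F₁ ω) (fun ω => F ω = F₂ ω)
        (fun ω hb => by simp [hb]) (fun ω hb => by simp [hb])
        ((hB (measurableSet_singleton 1)).inter (measurableSet_eqfun hF hF₂))]
    have k1 := key 0 {q : ℕ × ℕ × ℕ × ℕ | q.2.1 = q.2.2.1}
    have k2 := key 1 {q : ℕ × ℕ × ℕ × ℕ | q.2.1 = q.2.2.2}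
    exact congrArg₂ (· + ·) k1 k2
  have e2 : ∀ l : ℕ, pr μ {ω | (if B ω = 0 then F₁ ω else F₂ ω) = l} =
      pr μ {ω | B ω = 0} * pr μ {ω | F₁ ω = l} + pr μ {ω | B ω = 1} * pr μ {ω | F₂ ω = l} := by
    intro l
    rw [mix (fun ω => (if B ω = 0 then F₁ ω else F₂ ω) = l)
        (fun ω => F₁ ω = l) (fun ω => F₂ ω = l)
        (fun ω hb => by simp [hb]) (fun ω hb => by simp [hb])
        ((hB (measurableSet_singleton 1)).inter (hF₂ (measurableSet_singleton l)))]
    have k1 := key 0 {q : ℕ × ℕ × ℕ × ℕ | q.2.2.1 = l}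
    have k2 := key 1 {q : ℕ × ℕ × ℕ × ℕ | q.2.2.2 = l}
    exact congrArg₂ (· + ·) k1 k2
  simp only [caScore]
  rw [e1, e2 1, e2 2, hB0, hBern]
  ring

/-- if the mixed reference `F̃` selects the truthful population's
classifier `F₁` with probability `1−γ` and the adversarial classifier `F₂` with
probability `γ` via an independent Bernoulli(γ) selector `B`, and `F` is conditionally
independent of each of `F₁`, `F₂` given `Y`, then
`S̄(F,F̃) = ((1−γ)·(1 − FNR(F₁) − FPR(F₁)) + γ·(1 − FNR(F₂) − FPR(F₂))) · S̄(F,Y)`. -/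
theorem ca_score_against_mixed_reference
    {Ω : Type*} [MeasurableSpace Ω] (μ : Measure Ω) [IsProbabilityMeasure μ]
    (γ : ℝ) (hγ0 : 0 ≤ γ) (hγ1 : γ ≤ 1)
    (F F₁ F₂ Y : Ω → ℕ) (B : Ω → ℕ)
    (hFmeas : Measurable F) (hF₁meas : Measurable F₁)
    (hF₂meas : Measurable F₂) (hYmeas : Measurable Y) (hBmeas : Measurable B)
    (hFbin : IsBinaryLabel F) (hF₁bin : IsBinaryLabel F₁)
    (hF₂bin : IsBinaryLabel F₂) (hYbin : IsBinaryLabel Y)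
    (hY1pos : 0 < pr μ {ω | Y ω = 1}) (hY1lt : pr μ {ω | Y ω = 1} < 1)
    (hci1 : CondIndepGiven μ F F₁ Y) (hci2 : CondIndepGiven μ F F₂ Y)
    (hB01 : ∀ ω, B ω = 0 ∨ B ω = 1)
    (hBern : pr μ {ω | B ω = 1} = γ)
    (hBindep : ProbabilityTheory.IndepFun B (fun ω => (Y ω, F ω, F₁ ω, F₂ ω)) μ) :
    caScore μ F (fun ω => if B ω = 0 then F₁ ω else F₂ ω) =
      ((1 - γ) * (1 - fnr μ F₁ Y - fpr μ F₁ Y) +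
          γ * (1 - fnr μ F₂ Y - fpr μ F₂ Y)) * caScore μ F Y := by
  rw [ca_mix μ γ F F₁ F₂ Y B hFmeas hF₁meas hF₂meas hYmeas hBmeas hB01 hBern hBindep,
    ca_condindep μ F F₁ Y hFmeas hF₁meas hYmeas hFbin hF₁bin hYbin hY1pos hY1lt hci1,
    ca_condindep μ F F₂ Y hFmeas hF₂meas hYmeas hFbin hF₂bin hYbin hY1pos hY1lt hci2]
  ring
end
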